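/- Consider the (n = 4, k = 2) code over ZMod 5 of Fig. 8(a): for message symbols a₁, a₂, b₁, b₂ : ZMod 5, node 1 stores (a₁, b₁), node 2 stores (a₂, b₂), node 3 stores (3a₁ + 2b₁ + a₂, b₁ + 2a₂ + 3b₂), and node 4 stores (3a₁ + 4b₁ + 2a₂, b₁ + 2a₂ + b₂). This code is MDS: for every S : Finset (Fin 4) with S.card = 2, the map from (a₁, a₂, b₁, b₂) to the tuple of pairs stored on the nodes in S is injective. -/
import Mathlib


/-- The (4,2) code of Fig. 8(a) over `ZMod 5`. -/
def fig8aCode (a₁ a₂ b₁ b₂ : ZMod 5) : Fin 4 → ZMod 5 × ZMod 5 :=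
  fun i =>
    if i = 0 then (a₁, b₁)
    else if i = 1 then (a₂, b₂)
    else if i = 2 then (3 * a₁ + 2 * b₁ + a₂, b₁ + 2 * a₂ + 3 * b₂)
    else (3 * a₁ + 4 * b₁ + 2 * a₂, b₁ + 2 * a₂ + b₂)

/-- The code of Fig. 8(a) is MDS: the message is recoverable from any 2 of the 4
nodes. -/
theorem fig8a_is_MDS :
    ∀ S : Finset (Fin 4), S.card = 2 →
      Function.Injective
        (fun m : ZMod 5 × ZMod 5 × ZMod 5 × ZMod 5 =>
          fun i : S => fig8aCode m.1 m.2.1 m.2.2.1 m.2.2.2 (i : Fin 4)) := by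
  intro S hS
  rw [Finset.card_eq_two] at hS
  obtain ⟨i, j, hij, rfl⟩ := hS
  rintro ⟨a1, a2, b1, b2⟩ ⟨c1, c2, d1, d2⟩ h
  have hc : (5 : ZMod 5) = 0 := rfl
  fin_cases i <;> fin_cases j
  · exact absurd rfl hij
  · have hi := congrFun h ⟨0, by decide⟩
    have hj := congrFun h ⟨1, by decide⟩
    simp only [fig8aCode, Prod.mk.injEq, Fin.reduceEq, reduceIte] at hi hj
    obtain ⟨h1, h2⟩ := hi
    obtain ⟨h3, h4⟩ := hj
    simp only [Prod.mk.injEq]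
    refine ⟨?_, ?_, ?_, ?_⟩
    · linear_combination 1*h1 + (0 - (0))*hc
    · linear_combination 1*h3 + (0 - (0))*hc
    · linear_combination 1*h2 + (0 - (0))*hc
    · linear_combination 1*h4 + (0 - (0))*hc
  · have hi := congrFun h ⟨0, by decide⟩
    have hj := congrFun h ⟨2, by decide⟩
    simp only [fig8aCode, Prod.mk.injEq, Fin.reduceEq, reduceIte] at hi hj
    obtain ⟨h1, h2⟩ := hi
    obtain ⟨h3, h4⟩ := hj
    simp only [Prod.mk.injEq]
    refine ⟨?_, ?_, ?_, ?_⟩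
    · linear_combination 1*h1 + (0 - (0))*hc
    · linear_combination 2*h1 + 3*h2 + 1*h3 + (1*c1 + 1*d1 - (1*a1 + 1*b1))*hc
    · linear_combination 1*h2 + (0 - (0))*hc
    · linear_combination 2*h1 + 1*h2 + 1*h3 + 2*h4 + (1*c1 + 1*c2 + 1*d1 + 1*d2 - (1*a1 + 1*a2 + 1*b1 + 1*b2))*hc
  · have hi := congrFun h ⟨0, by decide⟩
    have hj := congrFun h ⟨3, by decide⟩
    simp only [fig8aCode, Prod.mk.injEq, Fin.reduceEq, reduceIte] at hi hj
    obtain ⟨h1, h2⟩ := hi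
    obtain ⟨h3, h4⟩ := hj
    simp only [Prod.mk.injEq]
    refine ⟨?_, ?_, ?_, ?_⟩
    · linear_combination 1*h1 + (0 - (0))*hc
    · linear_combination 1*h1 + 3*h2 + 3*h3 + (2*c1 + 1*c2 + 3*d1 - (2*a1 + 1*a2 + 3*b1))*hc
    · linear_combination 1*h2 + (0 - (0))*hc
    · linear_combination 3*h1 + 3*h2 + 4*h3 + 1*h4 + (3*c1 + 2*c2 + 4*d1 - (3*a1 + 2*a2 + 4*b1))*hc
  · have hi := congrFun h ⟨1, by decide⟩
    have hj := congrFun h ⟨0, by decide⟩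
    simp only [fig8aCode, Prod.mk.injEq, Fin.reduceEq, reduceIte] at hi hj
    obtain ⟨h1, h2⟩ := hi
    obtain ⟨h3, h4⟩ := hj
    simp only [Prod.mk.injEq]
    refine ⟨?_, ?_, ?_, ?_⟩
    · linear_combination 1*h3 + (0 - (0))*hc
    · linear_combination 1*h1 + (0 - (0))*hc
    · linear_combination 1*h4 + (0 - (0))*hc
    · linear_combination 1*h2 + (0 - (0))*hc
  · exact absurd rfl hij
  · have hi := congrFun h ⟨1, by decide⟩
    have hj := congrFun h ⟨2, by decide⟩
    simp only [fig8aCode, Prod.mk.injEq, Fin.reduceEq, reduceIte] at hi hj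
    obtain ⟨h1, h2⟩ := hi
    obtain ⟨h3, h4⟩ := hj
    simp only [Prod.mk.injEq]
    refine ⟨?_, ?_, ?_, ?_⟩
    · linear_combination 1*h1 + 2*h2 + 2*h3 + 1*h4 + (1*c1 + 1*c2 + 1*d1 + 1*d2 - (1*a1 + 1*a2 + 1*b1 + 1*b2))*hc
    · linear_combination 1*h1 + (0 - (0))*hc
    · linear_combination 3*h1 + 2*h2 + 1*h4 + (1*c2 + 1*d2 - (1*a2 + 1*b2))*hc
    · linear_combination 1*h2 + (0 - (0))*hc
  · have hi := congrFun h ⟨1, by decide⟩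
    have hj := congrFun h ⟨3, by decide⟩
    simp only [fig8aCode, Prod.mk.injEq, Fin.reduceEq, reduceIte] at hi hj
    obtain ⟨h1, h2⟩ := hi
    obtain ⟨h3, h4⟩ := hj
    simp only [Prod.mk.injEq]
    refine ⟨?_, ?_, ?_, ?_⟩
    · linear_combination 2*h1 + 3*h2 + 2*h3 + 2*h4 + (1*c1 + 2*c2 + 2*d1 + 1*d2 - (1*a1 + 2*a2 + 2*b1 + 1*b2))*hc
    · linear_combination 1*h1 + (0 - (0))*hc
    · linear_combination 3*h1 + 4*h2 + 1*h4 + (1*c2 + 1*d2 - (1*a2 + 1*b2))*hc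
    · linear_combination 1*h2 + (0 - (0))*hc
  · have hi := congrFun h ⟨2, by decide⟩
    have hj := congrFun h ⟨0, by decide⟩
    simp only [fig8aCode, Prod.mk.injEq, Fin.reduceEq, reduceIte] at hi hj
    obtain ⟨h1, h2⟩ := hi
    obtain ⟨h3, h4⟩ := hj
    simp only [Prod.mk.injEq]
    refine ⟨?_, ?_, ?_, ?_⟩
    · linear_combination 1*h3 + (0 - (0))*hc
    · linear_combination 1*h1 + 2*h3 + 3*h4 + (1*c1 + 1*d1 - (1*a1 + 1*b1))*hc
    · linear_combination 1*h4 + (0 - (0))*hc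
    · linear_combination 1*h1 + 2*h2 + 2*h3 + 1*h4 + (1*c1 + 1*c2 + 1*d1 + 1*d2 - (1*a1 + 1*a2 + 1*b1 + 1*b2))*hc
  · have hi := congrFun h ⟨2, by decide⟩
    have hj := congrFun h ⟨1, by decide⟩
    simp only [fig8aCode, Prod.mk.injEq, Fin.reduceEq, reduceIte] at hi hj
    obtain ⟨h1, h2⟩ := hi
    obtain ⟨h3, h4⟩ := hj
    simp only [Prod.mk.injEq]
    refine ⟨?_, ?_, ?_, ?_⟩
    · linear_combination 2*h1 + 1*h2 + 1*h3 + 2*h4 + (1*c1 + 1*c2 + 1*d1 + 1*d2 - (1*a1 + 1*a2 + 1*b1 + 1*b2))*hc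
    · linear_combination 1*h3 + (0 - (0))*hc
    · linear_combination 1*h2 + 3*h3 + 2*h4 + (1*c2 + 1*d2 - (1*a2 + 1*b2))*hc
    · linear_combination 1*h4 + (0 - (0))*hc
  · exact absurd rfl hij
  · have hi := congrFun h ⟨2, by decide⟩
    have hj := congrFun h ⟨3, by decide⟩
    simp only [fig8aCode, Prod.mk.injEq, Fin.reduceEq, reduceIte] at hi hj
    obtain ⟨h1, h2⟩ := hi
    obtain ⟨h3, h4⟩ := hj
    simp only [Prod.mk.injEq]
    refine ⟨?_, ?_, ?_, ?_⟩
    · linear_combination 4*h1 + 3*h3 + (4*c1 + 2*c2 + 4*d1 - (4*a1 + 2*a2 + 4*b1))*hc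
    · linear_combination 2*h1 + 3*h2 + 3*h3 + 1*h4 + (3*c1 + 3*c2 + 4*d1 + 2*d2 - (3*a1 + 3*a2 + 4*b1 + 2*b2))*hc
    · linear_combination 1*h1 + 1*h2 + 4*h3 + 2*h4 + (3*c1 + 3*c2 + 4*d1 + 1*d2 - (3*a1 + 3*a2 + 4*b1 + 1*b2))*hc
    · linear_combination 3*h2 + 2*h4 + (2*c2 + 1*d1 + 2*d2 - (2*a2 + 1*b1 + 2*b2))*hc
  · have hi := congrFun h ⟨3, by decide⟩
    have hj := congrFun h ⟨0, by decide⟩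
    simp only [fig8aCode, Prod.mk.injEq, Fin.reduceEq, reduceIte] at hi hj
    obtain ⟨h1, h2⟩ := hi
    obtain ⟨h3, h4⟩ := hj
    simp only [Prod.mk.injEq]
    refine ⟨?_, ?_, ?_, ?_⟩
    · linear_combination 1*h3 + (0 - (0))*hc
    · linear_combination 3*h1 + 1*h3 + 3*h4 + (2*c1 + 1*c2 + 3*d1 - (2*a1 + 1*a2 + 3*b1))*hc
    · linear_combination 1*h4 + (0 - (0))*hc
    · linear_combination 4*h1 + 1*h2 + 3*h3 + 3*h4 + (3*c1 + 2*c2 + 4*d1 - (3*a1 + 2*a2 + 4*b1))*hc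
  · have hi := congrFun h ⟨3, by decide⟩
    have hj := congrFun h ⟨1, by decide⟩
    simp only [fig8aCode, Prod.mk.injEq, Fin.reduceEq, reduceIte] at hi hj
    obtain ⟨h1, h2⟩ := hi
    obtain ⟨h3, h4⟩ := hj
    simp only [Prod.mk.injEq]
    refine ⟨?_, ?_, ?_, ?_⟩
    · linear_combination 2*h1 + 2*h2 + 2*h3 + 3*h4 + (1*c1 + 2*c2 + 2*d1 + 1*d2 - (1*a1 + 2*a2 + 2*b1 + 1*b2))*hc
    · linear_combination 1*h3 + (0 - (0))*hc
    · linear_combination 1*h2 + 3*h3 + 4*h4 + (1*c2 + 1*d2 - (1*a2 + 1*b2))*hc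
    · linear_combination 1*h4 + (0 - (0))*hc
  · have hi := congrFun h ⟨3, by decide⟩
    have hj := congrFun h ⟨2, by decide⟩
    simp only [fig8aCode, Prod.mk.injEq, Fin.reduceEq, reduceIte] at hi hj
    obtain ⟨h1, h2⟩ := hi
    obtain ⟨h3, h4⟩ := hj
    simp only [Prod.mk.injEq]
    refine ⟨?_, ?_, ?_, ?_⟩
    · linear_combination 3*h1 + 4*h3 + (4*c1 + 2*c2 + 4*d1 - (4*a1 + 2*a2 + 4*b1))*hc
    · linear_combination 3*h1 + 1*h2 + 2*h3 + 3*h4 + (3*c1 + 3*c2 + 4*d1 + 2*d2 - (3*a1 + 3*a2 + 4*b1 + 2*b2))*hc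
    · linear_combination 4*h1 + 2*h2 + 1*h3 + 1*h4 + (3*c1 + 3*c2 + 4*d1 + 1*d2 - (3*a1 + 3*a2 + 4*b1 + 1*b2))*hc
    · linear_combination 2*h2 + 3*h4 + (2*c2 + 1*d1 + 2*d2 - (2*a2 + 1*b1 + 2*b2))*hc
  · exact absurd rfl hij
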